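/- Let (λ₁, v) be a real eigenpair of the n×n real matrix A = [a_{ij}] (n ≥ 2), where every component of v is nonzero. Let S = diag(v) and B = S^{-1} A S. If λ is a complex eigenvalue of A with λ ≠ λ₁, then |λ| ≤ max_{1≤i≤n} (|a_{ii}| + r̂_i), where r̂_i is the radius of the i-th Gershgorin disc of the second type of B^T (computed from the i-th column of B, whose diagonal entry equals a_{ii}). -/

import Mathlib

open Matrix
open scoped ENNReal

/-- Non-increasing (descending) sort of a list of reals. -/
noncomputable def sortDesc (l : List ℝ) : List ℝ := (l.insertionSort (· ≤ ·)).reverse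

/-- Given the descending rearrangement `l` of `n` numbers, the sum of the largest
(about) half minus the sum of the smallest (about) half, skipping the middle
element when `n` is odd. -/
noncomputable def halfSumDiff (n : ℕ) (l : List ℝ) : ℝ :=
  if n % 2 = 1 then (l.take ((n - 1) / 2)).sum - (l.drop ((n + 1) / 2)).sum
  else (l.take (n / 2)).sum - (l.drop (n / 2)).sum

/-- Radius of the `i`-th Gershgorin disc of the second type of `M`, computed from
the `i`-th row of `M` with the diagonal entry replaced by `0`. -/
noncomputable def secondTypeRadius {n : ℕ} (M : Matrix (Fin n) (Fin n) ℝ) (i : Fin n) : ℝ :=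
  halfSumDiff n (sortDesc (List.ofFn fun j : Fin n => if j = i then 0 else M i j))

/-- The `i`-th Gershgorin disc of the second type of `M`. -/
noncomputable def secondTypeDisc {n : ℕ} (M : Matrix (Fin n) (Fin n) ℝ) (i : Fin n) : Set ℂ :=
  Metric.closedBall ((M i i : ℝ) : ℂ) (secondTypeRadius M i)

/-- The Gershgorin region of the second type of `M`. -/
noncomputable def secondTypeRegion {n : ℕ} (M : Matrix (Fin n) (Fin n) ℝ) : Set ℂ :=
  ⋃ i : Fin n, secondTypeDisc M i

/-- `μ` is a (complex) eigenvalue of the real matrix `A`, i.e. a complex root of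
its characteristic polynomial. -/
def IsEigenvalueC {n : ℕ} (A : Matrix (Fin n) (Fin n) ℝ) (μ : ℂ) : Prop :=
  ((A.map ((↑) : ℝ → ℂ)).charpoly).IsRoot μ

/-- The `k`-th largest element (1-indexed) among the `n - 1` off-diagonal entries of
column `j` of `B`. -/
noncomputable def kthLargestOffDiag {n : ℕ} (B : Matrix (Fin n) (Fin n) ℝ) (j : Fin n)
    (k : ℕ) : ℝ :=
  (sortDesc (((List.ofFn fun i : Fin n => B i j).eraseIdx j.val))).getD (k - 1) 0

/-- The ℓ_p norm of a vector in ℝ^n. -/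
noncomputable def lpNorm {n : ℕ} (p : ℝ≥0∞) (x : Fin n → ℝ) : ℝ :=
  @norm (PiLp p fun _ : Fin n => ℝ) _ ((WithLp.equiv p (∀ _ : Fin n, ℝ)).symm x)

/-- The seminorm-like quantity `τ_p(B)`: the supremum of `‖Bᵀ x‖_p` over all real
vectors `x` with `xᵀ e = 0` and `‖x‖_p = 1`. -/
noncomputable def tau {n : ℕ} (p : ℝ≥0∞) (B : Matrix (Fin n) (Fin n) ℝ) : ℝ :=
  sSup { t : ℝ | ∃ x : Fin n → ℝ, (∑ i, x i) = 0 ∧ lpNorm p x = 1 ∧ t = lpNorm p (Bᵀ *ᵥ x) }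

/-- The Ostrowski–Brauer set `Γ(M)` of a real square matrix `M`. -/
noncomputable def brauerSet {n : ℕ} (M : Matrix (Fin n) (Fin n) ℝ) : Set ℂ :=
  ⋃ (i : Fin n) (j : Fin n) (_ : i < j),
    { y : ℂ | ‖y - (M i i : ℝ)‖ * ‖y - (M j j : ℝ)‖ ≤
        (∑ k ∈ Finset.univ.filter fun k => k ≠ i, |M i k|) *
        (∑ k ∈ Finset.univ.filter fun k => k ≠ j, |M j k|) }

/-- `cs_j(A)` from Definition 2.3: sorted column sums difference. -/
noncomputable def csCol {n : ℕ} (A : Matrix (Fin n) (Fin n) ℝ) (j : Fin n) : ℝ :=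
  halfSumDiff n (sortDesc (List.ofFn fun i : Fin n => A i j))

/-! Since `A v = λ₁ v`, every row of `B = S⁻¹ A S` sums to `λ₁`, so the all-ones vector is a left
eigenvector of `Bᵀ` for `λ₁`. An eigenvector `w` of `Bᵀ` for `μ ≠ λ₁` is then orthogonal to it,
`∑ j, w j = 0`, and in `(μ - a_ii) w_i = ∑_{j ≠ i} b_ji w_j` every `b_ji` may be shifted by a common
constant `c`. At an index `i` where `|w_i|` is maximal this gives `|μ - a_ii| ≤ ∑_j |y_j - c|`,
where `y` is column `i` of `B` with its diagonal entry replaced by `0`; taking `c` a median of `y`,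
the right-hand side is exactly `r̂_i`. -/

lemma List.sum_map_abs_sub_of_forall_le {l : List ℝ} {c : ℝ} (h : ∀ y ∈ l, c ≤ y) :
    (l.map fun y => |y - c|).sum = l.sum - l.length * c := by
  induction l with
  | nil => simp
  | cons a t ih =>
    simp only [List.forall_mem_cons] at h
    simp only [List.map_cons, List.sum_cons, ih h.2, abs_of_nonneg (sub_nonneg.2 h.1),
      List.length_cons]
    push_cast
    ring

lemma List.sum_map_abs_sub_of_forall_ge {l : List ℝ} {c : ℝ} (h : ∀ y ∈ l, y ≤ c) :
    (l.map fun y => |y - c|).sum = l.length * c - l.sum := by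
  induction l with
  | nil => simp
  | cons a t ih =>
    simp only [List.forall_mem_cons] at h
    simp only [List.map_cons, List.sum_cons, ih h.2, abs_of_nonpos (sub_nonpos.2 h.1),
      List.length_cons]
    push_cast
    ring

lemma sortDesc_perm (l : List ℝ) : (sortDesc l).Perm l :=
  (List.reverse_perm _).trans (List.perm_insertionSort _ l)

lemma sortDesc_pairwise (l : List ℝ) : (sortDesc l).Pairwise (· ≥ ·) := by
  rw [sortDesc, List.pairwise_reverse]
  exact List.pairwise_insertionSort (· ≤ ·) l

lemma halfSumDiff_eq_sum_map_abs_sub_median {p t : List ℝ} {c : ℝ}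
    (hs : (p ++ c :: t).Pairwise (· ≥ ·)) (hp : p.length = (p ++ c :: t).length / 2) :
    halfSumDiff (p ++ c :: t).length (p ++ c :: t) = ((p ++ c :: t).map fun y => |y - c|).sum := by
  obtain ⟨-, hct, hpc⟩ := List.pairwise_append.mp hs
  have hp_ge : ∀ y ∈ p, c ≤ y := fun y hy => hpc y hy c List.mem_cons_self
  have ht_le : ∀ y ∈ t, y ≤ c := (List.pairwise_cons.mp hct).1
  have hct_le : ∀ y ∈ c :: t, y ≤ c := List.forall_mem_cons.mpr ⟨le_rfl, ht_le⟩
  rw [List.map_append, List.sum_append, List.sum_map_abs_sub_of_forall_le hp_ge,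
    List.sum_map_abs_sub_of_forall_ge hct_le]
  simp only [List.length_append, List.length_cons] at hp ⊢
  unfold halfSumDiff
  split_ifs with hodd
  · rw [show (p.length + (t.length + 1) - 1) / 2 = p.length by omega,
      show (p.length + (t.length + 1) + 1) / 2 = p.length + 1 by omega, List.take_left' rfl,
      List.drop_append, List.drop_eq_nil_of_le (by omega), List.nil_append,
      Nat.add_sub_cancel_left, List.drop_one, List.tail_cons, List.sum_cons,
      show t.length = p.length by omega]
    push_cast
    ring
  · rw [← hp, List.take_left' rfl, List.drop_left' rfl, show t.length + 1 = p.length by omega]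
    ring

lemma exists_sum_map_abs_sub_eq_halfSumDiff (l : List ℝ) :
    ∃ c, (l.map fun y => |y - c|).sum = halfSumDiff l.length (sortDesc l) := by
  rcases eq_or_ne l [] with rfl | hl
  · exact ⟨0, by simp [halfSumDiff, sortDesc]⟩
  set s := sortDesc l
  have hperm : s.Perm l := sortDesc_perm l
  have hm : s.length / 2 < s.length := by
    rw [hperm.length_eq]; exact Nat.div_lt_self (List.length_pos_iff.2 hl) one_lt_two
  obtain ⟨p, c, t, hs, hp⟩ : ∃ p c t, s = p ++ c :: t ∧ p.length = s.length / 2 :=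
    ⟨_, _, _, by rw [← List.drop_eq_getElem_cons hm, List.take_append_drop], by simp; omega⟩
  have hsorted : s.Pairwise (· ≥ ·) := sortDesc_pairwise l
  refine ⟨c, ?_⟩
  rw [← (hperm.map _).sum_eq, ← hperm.length_eq]
  rw [hs] at hsorted hp ⊢
  exact (halfSumDiff_eq_sum_map_abs_sub_median hsorted hp).symm

lemma dotProduct_eq_zero_of_vecMul_eq_smul_of_mulVec_eq_smul {ι R : Type*} [Fintype ι]
    [CommRing R] [NoZeroDivisors R] {M : Matrix ι ι R} {u w : ι → R} {a b : R}
    (hu : u ᵥ* M = a • u) (hw : M *ᵥ w = b • w) (hab : a ≠ b) : u ⬝ᵥ w = 0 := by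
  have h : a * (u ⬝ᵥ w) = b * (u ⬝ᵥ w) := by
    rw [← smul_eq_mul, ← smul_dotProduct, ← hu, ← dotProduct_mulVec, hw, dotProduct_smul,
      smul_eq_mul]
  exact (mul_eq_mul_right_iff.mp h).resolve_left hab

section Eigenvalue

variable {n : ℕ} {μ : ℂ}

lemma isEigenvalueC_iff_of_charpoly_eq {A B : Matrix (Fin n) (Fin n) ℝ}
    (h : A.charpoly = B.charpoly) :
    IsEigenvalueC A μ ↔ IsEigenvalueC B μ := by
  rw [IsEigenvalueC, IsEigenvalueC, show ((↑) : ℝ → ℂ) = Complex.ofRealHom from rfl,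
    charpoly_map, charpoly_map, h]

lemma IsEigenvalueC.exists_mulVec_eq_smul {A : Matrix (Fin n) (Fin n) ℝ}
    (h : IsEigenvalueC A μ) : ∃ w ≠ 0, A.map ((↑) : ℝ → ℂ) *ᵥ w = μ • w := by
  have hμ : Module.End.HasEigenvalue (toLin' (A.map ((↑) : ℝ → ℂ))) μ := by
    rw [Module.End.hasEigenvalue_iff_isRoot_charpoly, Matrix.charpoly_toLin']
    exact h
  obtain ⟨w, hw⟩ := hμ.exists_hasEigenvector
  exact ⟨w, hw.2, by rw [← toLin'_apply, hw.apply_eq_smul]⟩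

end Eigenvalue

section SecondType

variable {n : ℕ} (M : Matrix (Fin n) (Fin n) ℝ) {μ : ℂ} {w : Fin n → ℂ}

lemma sub_diag_mul_eq_sum_shift (hMw : M.map ((↑) : ℝ → ℂ) *ᵥ w = μ • w)
    (hw : ∑ j, w j = 0) (i : Fin n) (c : ℝ) :
    (μ - M i i) * w i = ∑ j, (((if j = i then 0 else M i j) - c : ℝ) : ℂ) * w j := by
  have hrow : ∑ j, (M i j : ℂ) * w j = μ * w i := by
    simpa [mulVec, dotProduct] using congrFun hMw i
  have hoff : ∑ j, ((if j = i then 0 else M i j : ℝ) : ℂ) * w j =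
      ∑ j, (M i j : ℂ) * w j - M i i * w i := by
    rw [eq_sub_iff_add_eq, ← Finset.sum_erase_add _ _ (Finset.mem_univ i),
      ← Finset.sum_erase_add (f := fun j => (M i j : ℂ) * w j) _ (Finset.mem_univ i)]
    simp only [if_true, Complex.ofReal_zero, zero_mul, add_zero]
    congr 1
    exact Finset.sum_congr rfl fun j hj => by rw [if_neg (Finset.ne_of_mem_erase hj)]
  simp only [Complex.ofReal_sub, sub_mul, Finset.sum_sub_distrib, ← Finset.mul_sum, hw, hoff,
    hrow]
  ring

lemma mem_secondTypeRegion_of_mulVec_eq_smul (hMw : M.map ((↑) : ℝ → ℂ) *ᵥ w = μ • w)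
    (hw0 : w ≠ 0) (hw : ∑ j, w j = 0) : μ ∈ secondTypeRegion M := by
  obtain ⟨j, hj⟩ := Function.ne_iff.mp hw0
  obtain ⟨i, -, hmax⟩ :=
    Finset.exists_max_image Finset.univ (fun j => ‖w j‖) ⟨j, Finset.mem_univ j⟩
  have hwi : 0 < ‖w i‖ := (norm_pos_iff.mpr hj).trans_le (hmax j (Finset.mem_univ j))
  set y : Fin n → ℝ := fun j => if j = i then 0 else M i j
  obtain ⟨c, hc⟩ := exists_sum_map_abs_sub_eq_halfSumDiff (List.ofFn y)
  have hsum : ∑ j, |y j - c| = secondTypeRadius M i := by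
    rw [List.length_ofFn, List.map_ofFn, List.sum_ofFn] at hc
    exact hc
  refine Set.mem_iUnion.mpr ⟨i, Metric.mem_closedBall.mpr ?_⟩
  rw [dist_eq_norm, ← hsum]
  refine le_of_mul_le_mul_right ?_ hwi
  calc ‖μ - M i i‖ * ‖w i‖ = ‖∑ j, ((y j - c : ℝ) : ℂ) * w j‖ := by
        rw [← norm_mul, sub_diag_mul_eq_sum_shift M hMw hw i c]
    _ ≤ ∑ j, |y j - c| * ‖w j‖ := by
        refine (norm_sum_le _ _).trans_eq (Finset.sum_congr rfl fun j _ => ?_)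
        rw [norm_mul, Complex.norm_real, Real.norm_eq_abs]
    _ ≤ ∑ j, |y j - c| * ‖w i‖ := Finset.sum_le_sum fun j _ =>
        mul_le_mul_of_nonneg_left (hmax j (Finset.mem_univ j)) (abs_nonneg _)
    _ = (∑ j, |y j - c|) * ‖w i‖ := (Finset.sum_mul ..).symm

lemma exists_norm_le_of_mem_secondTypeRegion (h : μ ∈ secondTypeRegion M) :
    ∃ i, ‖μ‖ ≤ |M i i| + secondTypeRadius M i := by
  obtain ⟨i, hi⟩ := Set.mem_iUnion.mp h
  refine ⟨i, ?_⟩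
  calc ‖μ‖ ≤ ‖((M i i : ℝ) : ℂ)‖ + ‖μ - M i i‖ := norm_le_norm_add_norm_sub' _ _
    _ ≤ |M i i| + secondTypeRadius M i := by
        rw [Complex.norm_real, Real.norm_eq_abs, ← dist_eq_norm]
        exact add_le_add_right (Metric.mem_closedBall.mp hi) _

end SecondType

section DiagonalConj

variable {K ι : Type*} [Field K] [Fintype ι] [DecidableEq ι] {v : ι → K}

lemma inv_diagonal_of_ne_zero (hv : ∀ i, v i ≠ 0) : (diagonal v)⁻¹ = diagonal v⁻¹ :=
  inv_eq_left_inv (by rw [diagonal_mul_diagonal, ← diagonal_one]; simp [hv])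

lemma inv_diagonal_mul_mul_diagonal_apply_self (hv : ∀ i, v i ≠ 0) (A : Matrix ι ι K)
    (i : ι) :
    ((diagonal v)⁻¹ * A * diagonal v) i i = A i i := by
  rw [inv_diagonal_of_ne_zero hv, mul_diagonal, diagonal_mul, Pi.inv_apply, mul_right_comm,
    inv_mul_cancel₀ (hv i), one_mul]

lemma inv_diagonal_mul_mul_diagonal_mulVec_one (hv : ∀ i, v i ≠ 0) {A : Matrix ι ι K} {c : K}
    (hAv : A *ᵥ v = c • v) : ((diagonal v)⁻¹ * A * diagonal v) *ᵥ 1 = c • 1 := by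
  have hv1 : diagonal v *ᵥ 1 = v := by
    ext i
    simp [mulVec_diagonal]
  have hvinv : (diagonal v)⁻¹ *ᵥ v = 1 := by
    ext i
    simp [inv_diagonal_of_ne_zero hv, mulVec_diagonal, hv]
  rw [← mulVec_mulVec, ← mulVec_mulVec, hv1, hAv, mulVec_smul, hvinv]

end DiagonalConj

/-- Theorem 7, bound (4): if `A v = λ₁ v` with all components of `v`
nonzero and `B = S⁻¹ A S` with `S = diag v`, then every eigenvalue `λ ≠ λ₁` of `A`
satisfies `|λ| ≤ max_i (|a_ii| + r̂_i)`, where `r̂_i` is the radius of the `i`-th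
Gershgorin disc of the second type of `Bᵀ`. -/
theorem stmt10 {n : ℕ} (hn : 2 ≤ n) (A : Matrix (Fin n) (Fin n) ℝ)
    (lam1 : ℝ) (v : Fin n → ℝ) (hv : ∀ i, v i ≠ 0) (hAv : A *ᵥ v = lam1 • v)
    (S B : Matrix (Fin n) (Fin n) ℝ) (hS : S = Matrix.diagonal v) (hB : B = S⁻¹ * A * S)
    (mu : ℂ) (hmu : IsEigenvalueC A mu) (hne : mu ≠ (lam1 : ℂ)) :
    ‖mu‖ ≤
      Finset.univ.sup' ⟨(⟨0, by omega⟩ : Fin n), Finset.mem_univ _⟩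
        (fun i => |A i i| + secondTypeRadius Bᵀ i) := by
  subst hS
  have hBdiag : ∀ i, B i i = A i i := hB ▸ inv_diagonal_mul_mul_diagonal_apply_self hv A
  have hB1 : B *ᵥ 1 = lam1 • 1 := hB ▸ inv_diagonal_mul_mul_diagonal_mulVec_one hv hAv
  have hcharpoly : Bᵀ.charpoly = A.charpoly := by
    obtain ⟨u, hu⟩ := isUnit_diagonal.mpr (Pi.isUnit_iff.mpr fun i => (hv i).isUnit)
    rw [charpoly_transpose, hB, ← hu, charpoly_units_conj']
  obtain ⟨w, hw0, hBw⟩ :=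
    ((isEigenvalueC_iff_of_charpoly_eq hcharpoly).mpr hmu).exists_mulVec_eq_smul
  have h1B : (1 : Fin n → ℂ) ᵥ* Bᵀ.map ((↑) : ℝ → ℂ) = (lam1 : ℂ) • 1 := by
    ext i
    have hrow := congrFun hB1 i
    simp only [mulVec, dotProduct, Pi.one_apply, mul_one, Pi.smul_apply, smul_eq_mul] at hrow
    simp [vecMul, dotProduct, ← hrow]
  have hw : ∑ j, w j = 0 := by
    rw [← one_dotProduct]
    exact dotProduct_eq_zero_of_vecMul_eq_smul_of_mulVec_eq_smul h1B hBw (Ne.symm hne)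
  obtain ⟨i, hi⟩ := exists_norm_le_of_mem_secondTypeRegion _
    (mem_secondTypeRegion_of_mulVec_eq_smul _ hBw hw0 hw)
  rw [transpose_apply, hBdiag] at hi
  exact hi.trans <|
    Finset.le_sup' (fun i => |A i i| + secondTypeRadius Bᵀ i) (Finset.mem_univ i)
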